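/- Let 0 < ε < 1 be real and n ≥ 1 an integer, and let G'(n,ε) be the ladder graph. The subgraph S of G'(n,ε) whose edge set consists of the edge (u_0, v_0) together with all edges (u_0, u_j) and (v_0, v_j) for 1 ≤ j ≤ n is a (1+ε)-spanner of G'(n,ε) of total weight 1 + nε; moreover, every (1+ε)-spanner of G'(n,ε) has total weight at least 1 + nε, so S is a minimum-weight (1+ε)-spanner of G'(n,ε). -/
import Mathlib


open scoped BigOperators

namespace Paper

variable {V : Type*}

/-- The weight of a walk: the sum of its edge weights, with multiplicity. -/
noncomputable def wWalk (w : V → V → ℝ) {G : SimpleGraph V} {u v : V} (p : G.Walk u v) : ℝ :=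
  (p.darts.map fun d => w d.toProd.1 d.toProd.2).sum

/-- The distance between two vertices: the infimum of the weights of walks
between them, `⊤` if there is none. -/
noncomputable def gdist (G : SimpleGraph V) (w : V → V → ℝ) (u v : V) : EReal :=
  ⨅ p : G.Walk u v, (wWalk w p : EReal)

/-- `H` is a `t`-spanner of `G` with respect to the weights `w`. -/
def IsSpanner (G : SimpleGraph V) (w : V → V → ℝ) (H : SimpleGraph V) (t : ℝ) : Prop :=
  H ≤ G ∧ ∀ u v : V, gdist H w u v ≤ (t : EReal) * gdist G w u v

/-- The total weight of the edges of a graph. -/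
noncomputable def wGraph (G : SimpleGraph V) (w : V → V → ℝ)
    (hw : ∀ a b, w a b = w b a) : ℝ :=
  ∑ᶠ e ∈ G.edgeSet, Sym2.lift ⟨w, hw⟩ e

/-- Vertices of the ladder graph: `Sum.inl i` is `u_i`, `Sum.inr i` is `v_i`. -/
abbrev LV (n : ℕ) := Fin (n + 1) ⊕ Fin (n + 1)

/-- Base relation for the ladder graph `G'(n,ε)`: rungs `(u_i, v_i)` and
star edges `(u_0, u_j)`, `(v_0, v_j)`. -/
def ladderRel (n : ℕ) : LV n → LV n → Prop
  | Sum.inl i, Sum.inr j => i = j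
  | Sum.inl i, Sum.inl _ => i = 0
  | Sum.inr i, Sum.inr _ => i = 0
  | Sum.inr _, Sum.inl _ => False

/-- The ladder graph `G'(n,ε)`. -/
def ladder (n : ℕ) : SimpleGraph (LV n) := SimpleGraph.fromRel (ladderRel n)

/-- Edge weights of the ladder graph: rungs have weight `1`,
star edges have weight `ε/2`. -/
noncomputable def ladderW (n : ℕ) (ε : ℝ) : LV n → LV n → ℝ
  | Sum.inl _, Sum.inr _ => 1
  | Sum.inr _, Sum.inl _ => 1
  | _, _ => ε / 2

lemma ladderW_symm (n : ℕ) (ε : ℝ) : ∀ a b : LV n, ladderW n ε a b = ladderW n ε b a := by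
  rintro (a | a) (b | b) <;> rfl

/-- Base relation of the candidate optimal spanner `S`: the edge `(u_0, v_0)`
together with all star edges. -/
def optRel (n : ℕ) : LV n → LV n → Prop
  | Sum.inl i, Sum.inr j => i = 0 ∧ j = 0
  | Sum.inl i, Sum.inl _ => i = 0
  | Sum.inr i, Sum.inr _ => i = 0
  | Sum.inr _, Sum.inl _ => False

/-- The subgraph `S` of the ladder graph. -/
def optS (n : ℕ) : SimpleGraph (LV n) := SimpleGraph.fromRel (optRel n)

/-! ### Generic helpers about walks and distances -/

section Generic

variable {G S : SimpleGraph V} {w : V → V → ℝ}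

lemma wWalk_nil {u : V} : wWalk w (SimpleGraph.Walk.nil : G.Walk u u) = 0 := rfl

lemma wWalk_cons {u x v : V} (h : G.Adj u x) (p : G.Walk x v) :
    wWalk w (SimpleGraph.Walk.cons h p) = w u x + wWalk w p := rfl

lemma pot_le_wWalk {f : V → ℝ} (hf : ∀ a b, G.Adj a b → |f a - f b| ≤ w a b) :
    ∀ {u v : V} (p : G.Walk u v), f v - f u ≤ wWalk w p := by
  intro u v p
  induction p with
  | nil => simp [wWalk_nil]
  | @cons a x c h p ih =>
    rw [wWalk_cons]
    have h1 := abs_le.1 (hf _ _ h)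
    linarith

lemma pot_le_gdist {f : V → ℝ} (hf : ∀ a b, G.Adj a b → |f a - f b| ≤ w a b) (u v : V) :
    ((f v - f u : ℝ) : EReal) ≤ gdist G w u v :=
  le_iInf fun p => EReal.coe_le_coe_iff.2 (pot_le_wWalk hf p)

lemma gdist_le_walk {u v : V} (p : G.Walk u v) : gdist G w u v ≤ (wWalk w p : EReal) :=
  iInf_le _ p

lemma gdist_le_of_walk {u v : V} {U : ℝ} (p : G.Walk u v) (h : wWalk w p = U) :
    gdist G w u v ≤ (U : EReal) := h ▸ gdist_le_walk p

lemma combine {u v : V} {t L U : ℝ}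
    (hL : ((L : ℝ) : EReal) ≤ gdist G w u v) (hU : gdist S w u v ≤ (U : EReal))
    (hLU : U ≤ t * L) (ht : 0 ≤ t) :
    gdist S w u v ≤ (t : EReal) * gdist G w u v :=
  calc gdist S w u v ≤ (U : EReal) := hU
    _ ≤ ((t * L : ℝ) : EReal) := EReal.coe_le_coe_iff.2 hLU
    _ = (t : EReal) * (L : EReal) := EReal.coe_mul t L
    _ ≤ (t : EReal) * gdist G w u v :=
        mul_le_mul_of_nonneg_left hL (by exact_mod_cast ht)

lemma wWalk_reverse (hw : ∀ a b, w a b = w b a) {u v : V} (p : G.Walk u v) :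
    wWalk w p.reverse = wWalk w p := by
  unfold wWalk
  rw [SimpleGraph.Walk.darts_reverse, List.map_reverse, List.sum_reverse, List.map_map]
  have he : ((fun d => w d.toProd.1 d.toProd.2) ∘ SimpleGraph.Dart.symm :
      G.Dart → ℝ) = fun d => w d.toProd.1 d.toProd.2 := funext fun d => hw _ _
  rw [he]

lemma gdist_comm (hw : ∀ a b, w a b = w b a) (u v : V) :
    gdist G w u v = gdist G w v u := by
  have h : ∀ a b : V, gdist G w a b ≤ gdist G w b a := by
    intro a b
    refine le_iInf fun p => ?_
    calc gdist G w a b ≤ (wWalk w p.reverse : EReal) := gdist_le_walk _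
      _ = _ := by rw [wWalk_reverse hw]
  exact le_antisymm (h u v) (h v u)

end Generic

/-! ### Basic facts about the ladder graph and the spanner `S` -/

section Ladder

variable {n : ℕ} {ε : ℝ}

lemma ladderW_ll (i j : Fin (n+1)) : ladderW n ε (Sum.inl i) (Sum.inl j) = ε / 2 := rfl
lemma ladderW_rr (i j : Fin (n+1)) : ladderW n ε (Sum.inr i) (Sum.inr j) = ε / 2 := rfl
lemma ladderW_lr (i j : Fin (n+1)) : ladderW n ε (Sum.inl i) (Sum.inr j) = 1 := rfl
lemma ladderW_rl (i j : Fin (n+1)) : ladderW n ε (Sum.inr i) (Sum.inl j) = 1 := rfl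

lemma ladder_adj {a b : LV n} :
    (ladder n).Adj a b ↔ a ≠ b ∧ (ladderRel n a b ∨ ladderRel n b a) :=
  SimpleGraph.fromRel_adj _ _ _

lemma optS_adj {a b : LV n} :
    (optS n).Adj a b ↔ a ≠ b ∧ (optRel n a b ∨ optRel n b a) :=
  SimpleGraph.fromRel_adj _ _ _

lemma optS_le_ladder : optS n ≤ ladder n := by
  intro a b h
  rw [optS_adj] at h
  rw [ladder_adj]
  obtain ⟨hne, hr⟩ := h
  refine ⟨hne, ?_⟩
  rcases a with a | a <;> rcases b with b | b <;> simp only [optRel, ladderRel] at hr ⊢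
  · tauto
  · obtain ⟨ha, hb⟩ | hf := hr
    · exact Or.inl (ha.trans hb.symm)
    · exact hf.elim
  · obtain hf | ⟨hb, ha⟩ := hr
    · exact hf.elim
    · exact Or.inr (hb.trans ha.symm)
  · tauto

lemma optS_adj_l0 {i : Fin (n+1)} (h : i ≠ 0) : (optS n).Adj (Sum.inl i) (Sum.inl 0) := by
  rw [optS_adj]; exact ⟨by simp [h], Or.inr rfl⟩

lemma optS_adj_0l {i : Fin (n+1)} (h : i ≠ 0) : (optS n).Adj (Sum.inl 0) (Sum.inl i) := by
  rw [optS_adj]; exact ⟨by simp [Ne.symm h], Or.inl rfl⟩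

lemma optS_adj_r0 {i : Fin (n+1)} (h : i ≠ 0) : (optS n).Adj (Sum.inr i) (Sum.inr 0) := by
  rw [optS_adj]; exact ⟨by simp [h], Or.inr rfl⟩

lemma optS_adj_0r {i : Fin (n+1)} (h : i ≠ 0) : (optS n).Adj (Sum.inr 0) (Sum.inr i) := by
  rw [optS_adj]; exact ⟨by simp [Ne.symm h], Or.inl rfl⟩

lemma optS_adj_00 : (optS n).Adj (Sum.inl (0 : Fin (n+1))) (Sum.inr 0) := by
  rw [optS_adj]; exact ⟨by simp, Or.inl ⟨rfl, rfl⟩⟩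

lemma ladder_adj_0l {i : Fin (n+1)} (h : i ≠ 0) : (ladder n).Adj (Sum.inl 0) (Sum.inl i) := by
  rw [ladder_adj]; exact ⟨by simp [Ne.symm h], Or.inl rfl⟩

lemma ladder_adj_0r {i : Fin (n+1)} (h : i ≠ 0) : (ladder n).Adj (Sum.inr 0) (Sum.inr i) := by
  rw [ladder_adj]; exact ⟨by simp [Ne.symm h], Or.inl rfl⟩

lemma ladder_adj_rung (i : Fin (n+1)) : (ladder n).Adj (Sum.inl i) (Sum.inr i) := by
  rw [ladder_adj]; exact ⟨by simp, Or.inl rfl⟩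

/-- Checking the Lipschitz condition for potentials on the ladder graph. -/
lemma pot_check {f : LV n → ℝ}
    (h1 : ∀ j, |f (Sum.inl 0) - f (Sum.inl j)| ≤ ε / 2)
    (h2 : ∀ j, |f (Sum.inr 0) - f (Sum.inr j)| ≤ ε / 2)
    (h3 : ∀ i, |f (Sum.inl i) - f (Sum.inr i)| ≤ 1) :
    ∀ a b, (ladder n).Adj a b → |f a - f b| ≤ ladderW n ε a b := by
  intro a b hab
  rw [ladder_adj] at hab
  obtain ⟨hne, hr⟩ := hab
  rcases a with a | a <;> rcases b with b | b <;> simp only [ladderRel] at hr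
  · rw [ladderW_ll]
    rcases hr with h | h
    · subst h; exact h1 b
    · subst h; rw [abs_sub_comm]; exact h1 a
  · rw [ladderW_lr]
    have h : a = b := by tauto
    subst h; exact h3 a
  · rw [ladderW_rl]
    have h : b = a := by tauto
    subst h; rw [abs_sub_comm]; exact h3 b
  · rw [ladderW_rr]
    rcases hr with h | h
    · subst h; exact h2 b
    · subst h; rw [abs_sub_comm]; exact h2 a

/-! ### Lower bounds for distances in the ladder graph -/

lemma ladder_ge_zero (hε0 : 0 < ε) (u v : LV n) :
    ((0 : ℝ) : EReal) ≤ gdist (ladder n) (ladderW n ε) u v := by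
  have hf : ∀ a b, (ladder n).Adj a b →
      |(fun _ : LV n => (0:ℝ)) a - (fun _ : LV n => (0:ℝ)) b| ≤ ladderW n ε a b := by
    refine pot_check ?_ ?_ ?_ <;> intro k <;> simp <;> linarith
  simpa using pot_le_gdist hf u v

lemma ladder_ge_cross (hε0 : 0 < ε) (i j : Fin (n+1)) :
    ((1 : ℝ) : EReal) ≤ gdist (ladder n) (ladderW n ε) (Sum.inl i) (Sum.inr j) := by
  have hf : ∀ a b, (ladder n).Adj a b →
      |Sum.elim (fun _ => (0:ℝ)) (fun _ => (1:ℝ)) a -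
        Sum.elim (fun _ => (0:ℝ)) (fun _ => (1:ℝ)) b| ≤ ladderW n ε a b := by
    refine pot_check ?_ ?_ ?_ <;> intro k <;> simp <;> linarith
  simpa using pot_le_gdist hf (Sum.inl i) (Sum.inr j)

lemma ladder_ge_ll0 (hε0 : 0 < ε) (hε1 : ε < 1) {j : Fin (n+1)} (hj : j ≠ 0) :
    ((ε/2 : ℝ) : EReal) ≤ gdist (ladder n) (ladderW n ε) (Sum.inl 0) (Sum.inl j) := by
  classical
  set f : LV n → ℝ := fun x => if x = Sum.inl j then ε/2 else 0 with hfdef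
  have hf : ∀ a b, (ladder n).Adj a b → |f a - f b| ≤ ladderW n ε a b := by
    refine pot_check ?_ ?_ ?_ <;> intro k <;> simp only [hfdef] <;>
      first
        | (split_ifs <;>
            first
              | (rw [abs_le]; constructor <;> linarith)
              | (exfalso; simp_all))
        | (rw [abs_le]; constructor <;> linarith)
  have hj0 : (Sum.inl 0 : LV n) ≠ Sum.inl j := by simp [Ne.symm hj]
  have h := pot_le_gdist hf (Sum.inl 0) (Sum.inl j)
  have e1 : f (Sum.inl j) = ε/2 := by simp [hfdef]
  have e2 : f (Sum.inl 0) = 0 := by simp [hfdef, hj0]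
  rw [e1, e2] at h
  have e3 : ε/2 - 0 = ε/2 := by ring
  rwa [e3] at h

lemma ladder_ge_rr0 (hε0 : 0 < ε) (hε1 : ε < 1) {j : Fin (n+1)} (hj : j ≠ 0) :
    ((ε/2 : ℝ) : EReal) ≤ gdist (ladder n) (ladderW n ε) (Sum.inr 0) (Sum.inr j) := by
  classical
  set f : LV n → ℝ := fun x => if x = Sum.inr j then ε/2 else 0 with hfdef
  have hf : ∀ a b, (ladder n).Adj a b → |f a - f b| ≤ ladderW n ε a b := by
    refine pot_check ?_ ?_ ?_ <;> intro k <;> simp only [hfdef] <;>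
      first
        | (split_ifs <;>
            first
              | (rw [abs_le]; constructor <;> linarith)
              | (exfalso; simp_all))
        | (rw [abs_le]; constructor <;> linarith)
  have hj0 : (Sum.inr 0 : LV n) ≠ Sum.inr j := by simp [Ne.symm hj]
  have h := pot_le_gdist hf (Sum.inr 0) (Sum.inr j)
  have e1 : f (Sum.inr j) = ε/2 := by simp [hfdef]
  have e2 : f (Sum.inr 0) = 0 := by simp [hfdef, hj0]
  rw [e1, e2] at h
  have e3 : ε/2 - 0 = ε/2 := by ring
  rwa [e3] at h

lemma ladder_ge_ll (hε0 : 0 < ε) (hε1 : ε < 1) {i j : Fin (n+1)} (hi : i ≠ 0) (hj : j ≠ 0) (hij : i ≠ j) :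
    ((ε : ℝ) : EReal) ≤ gdist (ladder n) (ladderW n ε) (Sum.inl i) (Sum.inl j) := by
  classical
  set f : LV n → ℝ := fun x =>
    if x = Sum.inl i then -(ε/2) else if x = Sum.inl j then ε/2 else 0 with hfdef
  have hf : ∀ a b, (ladder n).Adj a b → |f a - f b| ≤ ladderW n ε a b := by
    refine pot_check ?_ ?_ ?_ <;> intro k <;> simp only [hfdef] <;>
      first
        | (split_ifs <;>
            first
              | (rw [abs_le]; constructor <;> linarith)
              | (exfalso; simp_all))
        | (rw [abs_le]; constructor <;> linarith)
  have hji : (Sum.inl j : LV n) ≠ Sum.inl i := by simp [Ne.symm hij]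
  have h := pot_le_gdist hf (Sum.inl i) (Sum.inl j)
  have e1 : f (Sum.inl j) = ε/2 := by simp [hfdef, hji]
  have e2 : f (Sum.inl i) = -(ε/2) := by simp [hfdef]
  rw [e1, e2] at h
  have e3 : ε/2 - -(ε/2) = ε := by ring
  rwa [e3] at h

lemma ladder_ge_rr (hε0 : 0 < ε) (hε1 : ε < 1) {i j : Fin (n+1)} (hi : i ≠ 0) (hj : j ≠ 0) (hij : i ≠ j) :
    ((ε : ℝ) : EReal) ≤ gdist (ladder n) (ladderW n ε) (Sum.inr i) (Sum.inr j) := by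
  classical
  set f : LV n → ℝ := fun x =>
    if x = Sum.inr i then -(ε/2) else if x = Sum.inr j then ε/2 else 0 with hfdef
  have hf : ∀ a b, (ladder n).Adj a b → |f a - f b| ≤ ladderW n ε a b := by
    refine pot_check ?_ ?_ ?_ <;> intro k <;> simp only [hfdef] <;>
      first
        | (split_ifs <;>
            first
              | (rw [abs_le]; constructor <;> linarith)
              | (exfalso; simp_all))
        | (rw [abs_le]; constructor <;> linarith)
  have hji : (Sum.inr j : LV n) ≠ Sum.inr i := by simp [Ne.symm hij]
  have h := pot_le_gdist hf (Sum.inr i) (Sum.inr j)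
  have e1 : f (Sum.inr j) = ε/2 := by simp [hfdef, hji]
  have e2 : f (Sum.inr i) = -(ε/2) := by simp [hfdef]
  rw [e1, e2] at h
  have e3 : ε/2 - -(ε/2) = ε := by ring
  rwa [e3] at h

/-! ### Upper bounds via explicit walks in `S` -/

lemma optS_le_ll0 {j : Fin (n+1)} (hj : j ≠ 0) :
    gdist (optS n) (ladderW n ε) (Sum.inl 0) (Sum.inl j) ≤ ((ε/2 : ℝ) : EReal) :=
  gdist_le_of_walk (SimpleGraph.Walk.cons (optS_adj_0l hj) SimpleGraph.Walk.nil)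
    (by rw [wWalk_cons, wWalk_nil, ladderW_ll]; ring)

lemma optS_le_rr0 {j : Fin (n+1)} (hj : j ≠ 0) :
    gdist (optS n) (ladderW n ε) (Sum.inr 0) (Sum.inr j) ≤ ((ε/2 : ℝ) : EReal) :=
  gdist_le_of_walk (SimpleGraph.Walk.cons (optS_adj_0r hj) SimpleGraph.Walk.nil)
    (by rw [wWalk_cons, wWalk_nil, ladderW_rr]; ring)

lemma optS_le_ll {i j : Fin (n+1)} (hi : i ≠ 0) (hj : j ≠ 0) :
    gdist (optS n) (ladderW n ε) (Sum.inl i) (Sum.inl j) ≤ ((ε : ℝ) : EReal) :=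
  gdist_le_of_walk (SimpleGraph.Walk.cons (optS_adj_l0 hi)
      (SimpleGraph.Walk.cons (optS_adj_0l hj) SimpleGraph.Walk.nil))
    (by rw [wWalk_cons, wWalk_cons, wWalk_nil, ladderW_ll, ladderW_ll]; ring)

lemma optS_le_rr {i j : Fin (n+1)} (hi : i ≠ 0) (hj : j ≠ 0) :
    gdist (optS n) (ladderW n ε) (Sum.inr i) (Sum.inr j) ≤ ((ε : ℝ) : EReal) :=
  gdist_le_of_walk (SimpleGraph.Walk.cons (optS_adj_r0 hi)
      (SimpleGraph.Walk.cons (optS_adj_0r hj) SimpleGraph.Walk.nil))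
    (by rw [wWalk_cons, wWalk_cons, wWalk_nil, ladderW_rr, ladderW_rr]; ring)

lemma optS_le_00 :
    gdist (optS n) (ladderW n ε) (Sum.inl (0 : Fin (n+1))) (Sum.inr 0) ≤ ((1 : ℝ) : EReal) :=
  gdist_le_of_walk (SimpleGraph.Walk.cons optS_adj_00 SimpleGraph.Walk.nil)
    (by rw [wWalk_cons, wWalk_nil, ladderW_lr]; ring)

lemma optS_le_0r {j : Fin (n+1)} (hj : j ≠ 0) :
    gdist (optS n) (ladderW n ε) (Sum.inl 0) (Sum.inr j) ≤ ((1 + ε/2 : ℝ) : EReal) :=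
  gdist_le_of_walk (SimpleGraph.Walk.cons optS_adj_00
      (SimpleGraph.Walk.cons (optS_adj_0r hj) SimpleGraph.Walk.nil))
    (by rw [wWalk_cons, wWalk_cons, wWalk_nil, ladderW_lr, ladderW_rr]; ring)

lemma optS_le_l0 {i : Fin (n+1)} (hi : i ≠ 0) :
    gdist (optS n) (ladderW n ε) (Sum.inl i) (Sum.inr 0) ≤ ((1 + ε/2 : ℝ) : EReal) :=
  gdist_le_of_walk (SimpleGraph.Walk.cons (optS_adj_l0 hi)
      (SimpleGraph.Walk.cons optS_adj_00 SimpleGraph.Walk.nil))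
    (by rw [wWalk_cons, wWalk_cons, wWalk_nil, ladderW_ll, ladderW_lr]; ring)

lemma optS_le_lr {i j : Fin (n+1)} (hi : i ≠ 0) (hj : j ≠ 0) :
    gdist (optS n) (ladderW n ε) (Sum.inl i) (Sum.inr j) ≤ ((1 + ε : ℝ) : EReal) :=
  gdist_le_of_walk (SimpleGraph.Walk.cons (optS_adj_l0 hi)
      (SimpleGraph.Walk.cons optS_adj_00
        (SimpleGraph.Walk.cons (optS_adj_0r hj) SimpleGraph.Walk.nil)))
    (by rw [wWalk_cons, wWalk_cons, wWalk_cons, wWalk_nil, ladderW_ll, ladderW_lr,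
      ladderW_rr]; ring)

/-! ### The spanner inequality -/

lemma key_cross (hε0 : 0 < ε) (hε1 : ε < 1) (i j : Fin (n+1)) :
    gdist (optS n) (ladderW n ε) (Sum.inl i) (Sum.inr j) ≤
      ((1 + ε : ℝ) : EReal) * gdist (ladder n) (ladderW n ε) (Sum.inl i) (Sum.inr j) := by
  have ht : (0:ℝ) ≤ 1 + ε := by linarith
  rcases eq_or_ne i 0 with rfl | hi
  · rcases eq_or_ne j 0 with rfl | hj
    · exact combine (ladder_ge_cross hε0 0 0) optS_le_00 (by linarith) ht
    · exact combine (ladder_ge_cross hε0 0 j) (optS_le_0r hj) (by linarith) ht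
  · rcases eq_or_ne j 0 with rfl | hj
    · exact combine (ladder_ge_cross hε0 i 0) (optS_le_l0 hi) (by linarith) ht
    · exact combine (ladder_ge_cross hε0 i j) (optS_le_lr hi hj) (by linarith) ht

lemma key_spanner (hε0 : 0 < ε) (hε1 : ε < 1) (u v : LV n) :
    gdist (optS n) (ladderW n ε) u v ≤
      ((1 + ε : ℝ) : EReal) * gdist (ladder n) (ladderW n ε) u v := by
  have ht : (0:ℝ) ≤ 1 + ε := by linarith
  have hdiag : ∀ x : LV n, gdist (optS n) (ladderW n ε) x x ≤
      ((1 + ε : ℝ) : EReal) * gdist (ladder n) (ladderW n ε) x x := fun x =>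
    combine (ladder_ge_zero hε0 x x)
      (gdist_le_of_walk SimpleGraph.Walk.nil wWalk_nil) (by linarith) ht
  have hll0 : ∀ j : Fin (n+1), j ≠ 0 → gdist (optS n) (ladderW n ε) (Sum.inl 0) (Sum.inl j) ≤
      ((1 + ε : ℝ) : EReal) * gdist (ladder n) (ladderW n ε) (Sum.inl 0) (Sum.inl j) :=
    fun j hj => combine (ladder_ge_ll0 hε0 hε1 hj) (optS_le_ll0 hj) (by nlinarith) ht
  have hrr0 : ∀ j : Fin (n+1), j ≠ 0 → gdist (optS n) (ladderW n ε) (Sum.inr 0) (Sum.inr j) ≤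
      ((1 + ε : ℝ) : EReal) * gdist (ladder n) (ladderW n ε) (Sum.inr 0) (Sum.inr j) :=
    fun j hj => combine (ladder_ge_rr0 hε0 hε1 hj) (optS_le_rr0 hj) (by nlinarith) ht
  rcases u with i | i <;> rcases v with j | j
  · rcases eq_or_ne i j with rfl | hij
    · exact hdiag _
    · rcases eq_or_ne i 0 with rfl | hi
      · exact hll0 j (Ne.symm hij)
      · rcases eq_or_ne j 0 with rfl | hj
        · rw [gdist_comm (G := optS n) (ladderW_symm n ε),
            gdist_comm (G := ladder n) (ladderW_symm n ε)]
          exact hll0 i hi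
        · exact combine (ladder_ge_ll hε0 hε1 hi hj hij) (optS_le_ll hi hj) (by nlinarith) ht
  · exact key_cross hε0 hε1 i j
  · rw [gdist_comm (G := optS n) (ladderW_symm n ε),
      gdist_comm (G := ladder n) (ladderW_symm n ε)]
    exact key_cross hε0 hε1 j i
  · rcases eq_or_ne i j with rfl | hij
    · exact hdiag _
    · rcases eq_or_ne i 0 with rfl | hi
      · exact hrr0 j (Ne.symm hij)
      · rcases eq_or_ne j 0 with rfl | hj
        · rw [gdist_comm (G := optS n) (ladderW_symm n ε),
            gdist_comm (G := ladder n) (ladderW_symm n ε)]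
          exact hrr0 i hi
        · exact combine (ladder_ge_rr hε0 hε1 hi hj hij) (optS_le_rr hi hj) (by nlinarith) ht

end Ladder

/-! ### Edge sets and weights -/

/-- The star edges, as a finset of `Sym2`. -/
def starsF (n : ℕ) : Finset (Sym2 (LV n)) :=
  ((Finset.univ.erase (0 : Fin (n+1))).image fun j => s(Sum.inl 0, Sum.inl j)) ∪
    ((Finset.univ.erase (0 : Fin (n+1))).image fun j => s(Sum.inr 0, Sum.inr j))

section Weight

variable {n : ℕ} {ε : ℝ}

lemma card_erase0 : (Finset.univ.erase (0 : Fin (n+1))).card = n := by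
  rw [Finset.card_erase_of_mem (Finset.mem_univ _), Finset.card_univ, Fintype.card_fin]
  omega

lemma lift_ladderW (a b : LV n) :
    Sym2.lift ⟨ladderW n ε, ladderW_symm n ε⟩ s(a, b) = ladderW n ε a b :=
  Sym2.lift_mk _ _ _

lemma sum_starsF :
    ∑ e ∈ starsF n, Sym2.lift ⟨ladderW n ε, ladderW_symm n ε⟩ e = n * ε := by
  classical
  have hd : Disjoint
      ((Finset.univ.erase (0 : Fin (n+1))).image fun j => s(Sum.inl 0, Sum.inl j))
      ((Finset.univ.erase (0 : Fin (n+1))).image fun j =>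
        (s(Sum.inr 0, Sum.inr j) : Sym2 (LV n))) := by
    rw [Finset.disjoint_left]
    rintro e h1 h2
    obtain ⟨j, hj, rfl⟩ := Finset.mem_image.1 h1
    obtain ⟨k, hk, he⟩ := Finset.mem_image.1 h2
    rw [Sym2.eq_iff] at he
    simp at he
  have hi1 : ∀ x ∈ Finset.univ.erase (0 : Fin (n+1)),
      ∀ y ∈ Finset.univ.erase (0 : Fin (n+1)),
      (s(Sum.inl 0, Sum.inl x) : Sym2 (LV n)) = s(Sum.inl 0, Sum.inl y) → x = y := by
    intro x hx y hy h
    rw [Sym2.eq_iff] at h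
    simp only [Sum.inl.injEq] at h
    rcases h with ⟨-, h⟩ | ⟨h0, hx0⟩
    · exact h
    · exact absurd hx0 (Finset.mem_erase.1 hx).1
  have hi2 : ∀ x ∈ Finset.univ.erase (0 : Fin (n+1)),
      ∀ y ∈ Finset.univ.erase (0 : Fin (n+1)),
      (s(Sum.inr 0, Sum.inr x) : Sym2 (LV n)) = s(Sum.inr 0, Sum.inr y) → x = y := by
    intro x hx y hy h
    rw [Sym2.eq_iff] at h
    simp only [Sum.inr.injEq] at h
    rcases h with ⟨-, h⟩ | ⟨h0, hx0⟩
    · exact h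
    · exact absurd hx0 (Finset.mem_erase.1 hx).1
  rw [starsF, Finset.sum_union hd, Finset.sum_image hi1, Finset.sum_image hi2]
  simp only [lift_ladderW, ladderW_ll, ladderW_rr, Finset.sum_const, card_erase0,
    nsmul_eq_mul]
  ring

lemma rung_not_mem_starsF (i : Fin (n+1)) : s(Sum.inl i, Sum.inr i) ∉ starsF n := by
  simp [starsF, Sym2.eq_iff]

lemma sum_rung_starsF (i : Fin (n+1)) :
    ∑ e ∈ insert s(Sum.inl i, Sum.inr i) (starsF n),
      Sym2.lift ⟨ladderW n ε, ladderW_symm n ε⟩ e = 1 + n * ε := by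
  rw [Finset.sum_insert (rung_not_mem_starsF i), sum_starsF, lift_ladderW, ladderW_lr]

lemma lift_nonneg (hε0 : 0 ≤ ε) (e : Sym2 (LV n)) :
    0 ≤ Sym2.lift ⟨ladderW n ε, ladderW_symm n ε⟩ e := by
  induction e using Sym2.ind with
  | _ a b =>
    rw [lift_ladderW]
    rcases a with a | a <;> rcases b with b | b <;>
      simp only [ladderW_ll, ladderW_rr, ladderW_lr, ladderW_rl] <;> linarith

lemma optS_edgeSet :
    (optS n).edgeSet =
      ↑(insert s(Sum.inl (0 : Fin (n+1)), Sum.inr (0 : Fin (n+1))) (starsF n)) := by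
  ext e
  induction e using Sym2.ind with
  | _ a b =>
    rw [SimpleGraph.mem_edgeSet]
    simp only [Finset.coe_insert, Set.mem_insert_iff, Finset.mem_coe, Finset.mem_insert,
      starsF, Finset.mem_union, Finset.mem_image, Finset.mem_erase, Finset.mem_univ, and_true,
      optS_adj, Sym2.eq_iff]
    rcases a with a | a <;> rcases b with b | b <;>
      constructor <;>
      simp only [optRel, ne_eq, Sum.inl.injEq, Sum.inr.injEq, reduceCtorEq, false_and,
        and_false, or_false, false_or, or_self, not_false_eq_true, and_true, true_and] <;>
      aesop

end Weight

/-! ### Lower bound for arbitrary spanners -/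

section LowerBound

variable {n : ℕ} {ε : ℝ} {H : SimpleGraph (LV n)}

lemma spanner_star_l (hε0 : 0 < ε) (hε1 : ε < 1) (hle : H ≤ ladder n)
    (hsp : ∀ u v, gdist H (ladderW n ε) u v ≤
      ((1 + ε : ℝ) : EReal) * gdist (ladder n) (ladderW n ε) u v)
    {j : Fin (n+1)} (hj : j ≠ 0) : H.Adj (Sum.inl 0) (Sum.inl j) := by
  classical
  by_contra hadj
  set f : LV n → ℝ :=
    fun x => if x = Sum.inl j then 2 else Sum.elim (fun _ => 0) (fun _ => 1) x with hfdef
  have hf : ∀ a b, H.Adj a b → |f a - f b| ≤ ladderW n ε a b := by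
    intro a b hab
    have hlab := hle hab
    rw [ladder_adj] at hlab
    obtain ⟨hne, hr⟩ := hlab
    rcases a with a | a <;> rcases b with b | b <;> simp only [ladderRel] at hr
    · rw [ladderW_ll]
      rcases hr with h | h
      · subst h
        rcases eq_or_ne b j with rfl | hbj
        · exact absurd hab hadj
        · have e1 : f (Sum.inl 0) = 0 := by simp [hfdef, Ne.symm hj]
          have e2 : f (Sum.inl b) = 0 := by simp [hfdef, hbj]
          rw [e1, e2, sub_self, abs_zero]; linarith
      · subst h
        rcases eq_or_ne a j with rfl | haj
        · exact absurd hab.symm hadj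
        · have e1 : f (Sum.inl a) = 0 := by simp [hfdef, haj]
          have e2 : f (Sum.inl 0) = 0 := by simp [hfdef, Ne.symm hj]
          rw [e1, e2, sub_self, abs_zero]; linarith
    · rw [ladderW_lr]
      have h : a = b := by tauto
      subst h
      have e2 : f (Sum.inr a) = 1 := by simp [hfdef]
      rcases eq_or_ne a j with rfl | haj
      · have e1 : f (Sum.inl a) = 2 := by simp [hfdef]
        rw [e1, e2]; norm_num
      · have e1 : f (Sum.inl a) = 0 := by simp [hfdef, haj]
        rw [e1, e2]; norm_num
    · rw [ladderW_rl]
      have h : b = a := by tauto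
      subst h
      have e1 : f (Sum.inr b) = 1 := by simp [hfdef]
      rcases eq_or_ne b j with rfl | hbj
      · have e2 : f (Sum.inl b) = 2 := by simp [hfdef]
        rw [e1, e2]; norm_num
      · have e2 : f (Sum.inl b) = 0 := by simp [hfdef, hbj]
        rw [e1, e2]; norm_num
    · rw [ladderW_rr]
      have e1 : f (Sum.inr a) = 1 := by simp [hfdef]
      have e2 : f (Sum.inr b) = 1 := by simp [hfdef]
      rw [e1, e2, sub_self, abs_zero]; linarith
  have h2 : ((2:ℝ) : EReal) ≤ gdist H (ladderW n ε) (Sum.inl 0) (Sum.inl j) := by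
    have h := pot_le_gdist hf (Sum.inl 0) (Sum.inl j)
    have e1 : f (Sum.inl j) = 2 := by simp [hfdef]
    have e2 : f (Sum.inl 0) = 0 := by simp [hfdef, Ne.symm hj]
    rw [e1, e2] at h
    have e3 : (2:ℝ) - 0 = 2 := by ring
    rwa [e3] at h
  have h4 : gdist (ladder n) (ladderW n ε) (Sum.inl 0) (Sum.inl j) ≤ ((ε/2 : ℝ) : EReal) :=
    gdist_le_of_walk (SimpleGraph.Walk.cons (ladder_adj_0l hj) SimpleGraph.Walk.nil)
      (by rw [wWalk_cons, wWalk_nil, ladderW_ll]; ring)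
  have h5 : ((2:ℝ):EReal) ≤ (((1+ε) * (ε/2) : ℝ) : EReal) := by
    refine le_trans h2 (le_trans (hsp _ _) ?_)
    rw [EReal.coe_mul]
    exact mul_le_mul_of_nonneg_left h4 (by exact_mod_cast (by linarith : (0:ℝ) ≤ 1+ε))
  have h6 := EReal.coe_le_coe_iff.1 h5
  nlinarith

lemma spanner_star_r (hε0 : 0 < ε) (hε1 : ε < 1) (hle : H ≤ ladder n)
    (hsp : ∀ u v, gdist H (ladderW n ε) u v ≤
      ((1 + ε : ℝ) : EReal) * gdist (ladder n) (ladderW n ε) u v)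
    {j : Fin (n+1)} (hj : j ≠ 0) : H.Adj (Sum.inr 0) (Sum.inr j) := by
  classical
  by_contra hadj
  set f : LV n → ℝ :=
    fun x => if x = Sum.inr j then 2 else Sum.elim (fun _ => 1) (fun _ => 0) x with hfdef
  have hf : ∀ a b, H.Adj a b → |f a - f b| ≤ ladderW n ε a b := by
    intro a b hab
    have hlab := hle hab
    rw [ladder_adj] at hlab
    obtain ⟨hne, hr⟩ := hlab
    rcases a with a | a <;> rcases b with b | b <;> simp only [ladderRel] at hr
    · rw [ladderW_ll]
      have e1 : f (Sum.inl a) = 1 := by simp [hfdef]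
      have e2 : f (Sum.inl b) = 1 := by simp [hfdef]
      rw [e1, e2, sub_self, abs_zero]; linarith
    · rw [ladderW_lr]
      have h : a = b := by tauto
      subst h
      have e1 : f (Sum.inl a) = 1 := by simp [hfdef]
      rcases eq_or_ne a j with rfl | haj
      · have e2 : f (Sum.inr a) = 2 := by simp [hfdef]
        rw [e1, e2]; norm_num
      · have e2 : f (Sum.inr a) = 0 := by simp [hfdef, haj]
        rw [e1, e2]; norm_num
    · rw [ladderW_rl]
      have h : b = a := by tauto
      subst h
      have e2 : f (Sum.inl b) = 1 := by simp [hfdef]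
      rcases eq_or_ne b j with rfl | hbj
      · have e1 : f (Sum.inr b) = 2 := by simp [hfdef]
        rw [e1, e2]; norm_num
      · have e1 : f (Sum.inr b) = 0 := by simp [hfdef, hbj]
        rw [e1, e2]; norm_num
    · rw [ladderW_rr]
      rcases hr with h | h
      · subst h
        rcases eq_or_ne b j with rfl | hbj
        · exact absurd hab hadj
        · have e1 : f (Sum.inr 0) = 0 := by simp [hfdef, Ne.symm hj]
          have e2 : f (Sum.inr b) = 0 := by simp [hfdef, hbj]
          rw [e1, e2, sub_self, abs_zero]; linarith
      · subst h
        rcases eq_or_ne a j with rfl | haj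
        · exact absurd hab.symm hadj
        · have e1 : f (Sum.inr a) = 0 := by simp [hfdef, haj]
          have e2 : f (Sum.inr 0) = 0 := by simp [hfdef, Ne.symm hj]
          rw [e1, e2, sub_self, abs_zero]; linarith
  have h2 : ((2:ℝ) : EReal) ≤ gdist H (ladderW n ε) (Sum.inr 0) (Sum.inr j) := by
    have h := pot_le_gdist hf (Sum.inr 0) (Sum.inr j)
    have e1 : f (Sum.inr j) = 2 := by simp [hfdef]
    have e2 : f (Sum.inr 0) = 0 := by simp [hfdef, Ne.symm hj]
    rw [e1, e2] at h
    have e3 : (2:ℝ) - 0 = 2 := by ring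
    rwa [e3] at h
  have h4 : gdist (ladder n) (ladderW n ε) (Sum.inr 0) (Sum.inr j) ≤ ((ε/2 : ℝ) : EReal) :=
    gdist_le_of_walk (SimpleGraph.Walk.cons (ladder_adj_0r hj) SimpleGraph.Walk.nil)
      (by rw [wWalk_cons, wWalk_nil, ladderW_rr]; ring)
  have h5 : ((2:ℝ):EReal) ≤ (((1+ε) * (ε/2) : ℝ) : EReal) := by
    refine le_trans h2 (le_trans (hsp _ _) ?_)
    rw [EReal.coe_mul]
    exact mul_le_mul_of_nonneg_left h4 (by exact_mod_cast (by linarith : (0:ℝ) ≤ 1+ε))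
  have h6 := EReal.coe_le_coe_iff.1 h5
  nlinarith

lemma spanner_rung (hε0 : 0 < ε) (hε1 : ε < 1) (hle : H ≤ ladder n)
    (hsp : ∀ u v, gdist H (ladderW n ε) u v ≤
      ((1 + ε : ℝ) : EReal) * gdist (ladder n) (ladderW n ε) u v) :
    ∃ i, H.Adj (Sum.inl i) (Sum.inr i) := by
  by_contra hadj
  push_neg at hadj
  set f : LV n → ℝ := Sum.elim (fun _ => 0) (fun _ => 3) with hfdef
  have hf : ∀ a b, H.Adj a b → |f a - f b| ≤ ladderW n ε a b := by
    intro a b hab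
    have hlab := hle hab
    rw [ladder_adj] at hlab
    obtain ⟨hne, hr⟩ := hlab
    rcases a with a | a <;> rcases b with b | b <;> simp only [ladderRel] at hr
    · rw [ladderW_ll]
      have e1 : f (Sum.inl a) = 0 := by simp [hfdef]
      have e2 : f (Sum.inl b) = 0 := by simp [hfdef]
      rw [e1, e2, sub_self, abs_zero]; linarith
    · have h : a = b := by tauto
      subst h
      exact absurd hab (hadj a)
    · have h : b = a := by tauto
      subst h
      exact absurd hab.symm (hadj b)
    · rw [ladderW_rr]
      have e1 : f (Sum.inr a) = 3 := by simp [hfdef]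
      have e2 : f (Sum.inr b) = 3 := by simp [hfdef]
      rw [e1, e2, sub_self, abs_zero]; linarith
  have h2 : ((3:ℝ) : EReal) ≤ gdist H (ladderW n ε) (Sum.inl 0) (Sum.inr 0) := by
    have h := pot_le_gdist hf (Sum.inl 0) (Sum.inr 0)
    have e1 : f (Sum.inr (0 : Fin (n+1))) = 3 := by simp [hfdef]
    have e2 : f (Sum.inl (0 : Fin (n+1))) = 0 := by simp [hfdef]
    rw [e1, e2] at h
    have e3 : (3:ℝ) - 0 = 3 := by ring
    rwa [e3] at h
  have h4 : gdist (ladder n) (ladderW n ε) (Sum.inl 0) (Sum.inr 0) ≤ ((1 : ℝ) : EReal) :=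
    gdist_le_of_walk (SimpleGraph.Walk.cons (ladder_adj_rung 0) SimpleGraph.Walk.nil)
      (by rw [wWalk_cons, wWalk_nil, ladderW_lr]; ring)
  have h5 : ((3:ℝ):EReal) ≤ (((1+ε) * 1 : ℝ) : EReal) := by
    refine le_trans h2 (le_trans (hsp _ _) ?_)
    rw [EReal.coe_mul]
    exact mul_le_mul_of_nonneg_left h4 (by exact_mod_cast (by linarith : (0:ℝ) ≤ 1+ε))
  have h6 := EReal.coe_le_coe_iff.1 h5
  nlinarith

end LowerBound

/-- `S` is a `(1+ε)`-spanner of the ladder graph of total weight `1 + nε`,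
and every `(1+ε)`-spanner of the ladder graph has total weight at least `1 + nε`. -/
theorem statement0 (n : ℕ) (hn : 1 ≤ n) (ε : ℝ) (hε0 : 0 < ε) (hε1 : ε < 1) :
    IsSpanner (ladder n) (ladderW n ε) (optS n) (1 + ε) ∧
    wGraph (optS n) (ladderW n ε) (ladderW_symm n ε) = 1 + n * ε ∧
    ∀ H : SimpleGraph (LV n), IsSpanner (ladder n) (ladderW n ε) H (1 + ε) →
      1 + n * ε ≤ wGraph H (ladderW n ε) (ladderW_symm n ε) := by
  classical
  refine ⟨⟨optS_le_ladder, fun u v => key_spanner hε0 hε1 u v⟩, ?_, ?_⟩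
  · have h : wGraph (optS n) (ladderW n ε) (ladderW_symm n ε) =
        ∑ᶠ e ∈ (optS n).edgeSet, Sym2.lift ⟨ladderW n ε, ladderW_symm n ε⟩ e := rfl
    rw [h, optS_edgeSet, finsum_mem_coe_finset]
    exact sum_rung_starsF 0
  · intro H hH
    obtain ⟨hle, hsp⟩ := hH
    obtain ⟨i, hrung⟩ := spanner_rung hε0 hε1 hle hsp
    have hfin : (H.edgeSet).Finite := Set.toFinite _
    have hsub : insert s(Sum.inl i, Sum.inr i) (starsF n) ⊆ hfin.toFinset := by
      intro e he
      rw [Set.Finite.mem_toFinset]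
      rcases Finset.mem_insert.1 he with rfl | he
      · exact (SimpleGraph.mem_edgeSet H).mpr hrung
      · rw [starsF, Finset.mem_union] at he
        rcases he with he | he
        · obtain ⟨j, hj, rfl⟩ := Finset.mem_image.1 he
          exact (SimpleGraph.mem_edgeSet H).mpr
            (spanner_star_l hε0 hε1 hle hsp (Finset.mem_erase.1 hj).1)
        · obtain ⟨j, hj, rfl⟩ := Finset.mem_image.1 he
          exact (SimpleGraph.mem_edgeSet H).mpr
            (spanner_star_r hε0 hε1 hle hsp (Finset.mem_erase.1 hj).1)
    calc (1 : ℝ) + (n:ℝ) * ε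
        = ∑ e ∈ insert s(Sum.inl i, Sum.inr i) (starsF n),
            Sym2.lift ⟨ladderW n ε, ladderW_symm n ε⟩ e := (sum_rung_starsF i).symm
      _ ≤ ∑ e ∈ hfin.toFinset, Sym2.lift ⟨ladderW n ε, ladderW_symm n ε⟩ e :=
          Finset.sum_le_sum_of_subset_of_nonneg hsub fun e _ _ => lift_nonneg hε0.le e
      _ = wGraph H (ladderW n ε) (ladderW_symm n ε) :=
          (finsum_mem_eq_finite_toFinset_sum _ hfin).symm

end Paper
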